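/- Refinement of tests implies refinement of hyper conditionals: let s : A → D(Fin n) and t : A → D(Fin m) be tests such that s ⊑ t, i.e., there exists h : Fin n → D(Fin m) with h_*(s(a)) = t(a) for all a ∈ A. Then for every ω ∈ D(A), the hyper distributions satisfy ω‖s ⊑ ω‖t in the hyper-refinement order. -/

import Mathlib

/-!
Write `σ = ω.bind (gr s)` and `τ = ω.bind (gr t)`. A joint law on `Fin n × A` is its first
marginal followed by its normalised components, and `hnorm` of any law of the form
`π.bind (i ↦ (κ i).map (i, ·))` is `π.bind (i ↦ η (i, κ i))`. As `t a = (s a).bind h`, `τ` is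
`σ` with the label `i` resampled through `h`; disintegrating `σ` shows that `τ` arises from the
joint law `ρ` of `(j, i)` followed by `σ_i`, so `τ_j = (ρ_j).bind (i ↦ σ_i)`. The witness is
`hnorm ρ` with each `i` replaced by `(i, σ_i)`: averaging out `j` gives `hnorm σ` because the
second marginal of `ρ` is the first marginal of `σ`, and averaging out the inner `i` gives
`hnorm τ`.
-/

open scoped ENNReal

noncomputable section

namespace HyperNorm

variable {A B : Type*} {n m : ℕ}

/-- `ω[i] = Σ_a ω(i,a)`. -/
def fmass (ω : PMF (Fin n × A)) (i : Fin n) : ℝ≥0∞ := ∑' a, ω (i, a)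

lemma tsum_fmass (ω : PMF (Fin n × A)) : ∑' i, fmass ω i = 1 := by
  simp only [fmass]
  rw [← ENNReal.tsum_prod']
  exact ω.tsum_coe

lemma fmass_ne_top (ω : PMF (Fin n × A)) (i : Fin n) : fmass ω i ≠ ⊤ := by
  apply ne_top_of_le_ne_top ENNReal.one_ne_top
  rw [← tsum_fmass ω]
  exact ENNReal.le_tsum i

/-- The first marginal `i ↦ ω[i]` as a distribution. -/
def fstM (ω : PMF (Fin n × A)) : PMF (Fin n) :=
  ⟨fun i => fmass ω i, ENNReal.summable.hasSum_iff.mpr (tsum_fmass ω)⟩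

/-- The normalised `i`-th component `ω_i(a) = ω(i,a)/ω[i]` (junk value if `ω[i] = 0`,
which never contributes to `hnorm` below since it is weighted by `ω[i] = 0`). -/
def ncond (ω : PMF (Fin n × A)) (i : Fin n) : PMF A :=
  if h : fmass ω i ≠ 0 then
    ⟨fun a => ω (i, a) / fmass ω i,
      ENNReal.summable.hasSum_iff.mpr (by
        simp only [div_eq_mul_inv]
        rw [ENNReal.tsum_mul_right, ← div_eq_mul_inv]
        exact ENNReal.div_self h (fmass_ne_top ω i))⟩
  else PMF.pure (ω.support_nonempty.some.2)

/-- Hyper normalisation `N(ω) = Σ_{i with ω[i] ≠ 0} ω[i]·η(i, ω_i)`. -/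
def hnorm (ω : PMF (Fin n × A)) : PMF (Fin n × PMF A) :=
  (fstM ω).bind fun i => PMF.pure (i, ncond ω i)

/-- Graph map `gr(f)(x)(y,x') = f(x)(y) if x' = x, else 0`. -/
def gr {X Y : Type*} (f : X → PMF Y) : X → PMF (Y × X) :=
  fun x => (f x).map fun y => (y, x)

lemma fstM_apply (ω : PMF (Fin n × A)) (i : Fin n) : fstM ω i = fmass ω i := rfl

lemma ncond_apply (ω : PMF (Fin n × A)) {i : Fin n} (h : fmass ω i ≠ 0) (a : A) :
    ncond ω i a = ω (i, a) / fmass ω i := by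
  unfold ncond
  exact congrArg (fun p : PMF A => p a) (dif_pos h)

lemma fmass_mul_ncond (ω : PMF (Fin n × A)) (i : Fin n) (a : A) :
    fmass ω i * ncond ω i a = ω (i, a) := by
  by_cases h : fmass ω i = 0
  · have : ω (i, a) ≤ fmass ω i := ENNReal.le_tsum a
    rw [h, zero_mul]
    exact (nonpos_iff_eq_zero.mp (h ▸ this)).symm
  · rw [ncond_apply ω h, mul_comm, ENNReal.div_mul_cancel h (fmass_ne_top ω i)]

lemma bind_map_prodMk_apply {α : Type*} (π : PMF α) (κ : α → PMF A) (i : α) (a : A) :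
    (π.bind fun i => (κ i).map (Prod.mk i)) (i, a) = π i * κ i a := by
  rw [PMF.bind_apply, tsum_eq_single i fun i' hi' => by simp [PMF.map_apply, hi'.symm]]
  congr 1
  rw [PMF.map_apply, tsum_eq_single a fun a' ha' => by simp [ha'.symm]]
  simp

lemma fmass_bind_map_prodMk (π : PMF (Fin n)) (κ : Fin n → PMF A) (i : Fin n) :
    fmass (π.bind fun i => (κ i).map (Prod.mk i)) i = π i := by
  simp only [fmass, bind_map_prodMk_apply, ENNReal.tsum_mul_left, PMF.tsum_coe, mul_one]

lemma fstM_bind_map_prodMk (π : PMF (Fin n)) (κ : Fin n → PMF A) :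
    fstM (π.bind fun i => (κ i).map (Prod.mk i)) = π :=
  PMF.ext (fmass_bind_map_prodMk π κ)

lemma ncond_bind_map_prodMk (π : PMF (Fin n)) (κ : Fin n → PMF A) {i : Fin n} (hi : π i ≠ 0) :
    ncond (π.bind fun i => (κ i).map (Prod.mk i)) i = κ i := by
  have hmass := fmass_bind_map_prodMk π κ i
  ext a
  rw [ncond_apply _ (hmass ▸ hi), bind_map_prodMk_apply, hmass]
  exact ((ENNReal.eq_div_iff hi (PMF.apply_ne_top π i)).mpr rfl).symm

lemma fstM_bind_map_ncond (ω : PMF (Fin n × A)) :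
    (fstM ω).bind (fun i => (ncond ω i).map (Prod.mk i)) = ω := by
  ext ⟨i, a⟩
  rw [bind_map_prodMk_apply, fstM_apply, fmass_mul_ncond]

lemma hnorm_bind_map_prodMk (π : PMF (Fin n)) (κ : Fin n → PMF A) :
    hnorm (π.bind fun i => (κ i).map (Prod.mk i)) = π.bind fun i => PMF.pure (i, κ i) := by
  ext x
  rw [hnorm, fstM_bind_map_prodMk, PMF.bind_apply, PMF.bind_apply]
  refine tsum_congr fun i => ?_
  by_cases hi : π i = 0
  · simp [hi]
  · rw [ncond_bind_map_prodMk π κ hi]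

lemma fstM_bind_ncond (ω : PMF (Fin n × A)) : (fstM ω).bind (ncond ω) = ω.map Prod.snd := by
  conv_rhs => rw [← fstM_bind_map_ncond ω]
  rw [PMF.map_bind]
  simp only [PMF.map_comp, Function.comp_def]
  exact congrArg _ (funext fun i => (PMF.map_id _).symm)

lemma bind_map_prodMk_eq_bind_ncond (ρ : PMF (Fin m × A)) (κ : A → PMF B) :
    ρ.bind (fun p => (κ p.2).map (Prod.mk p.1)) =
      (fstM ρ).bind fun j => ((ncond ρ j).bind κ).map (Prod.mk j) := by
  conv_lhs => rw [← fstM_bind_map_ncond ρ]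
  simp only [PMF.bind_bind, PMF.bind_map, PMF.map_bind, Function.comp_def]

lemma bind_gr_bind (s : A → PMF (Fin n)) (h : Fin n → PMF B) (ω : PMF A) :
    ω.bind (gr fun a => (s a).bind h) = (ω.bind (gr s)).bind fun p => (h p.1).map (·, p.2) := by
  unfold gr
  simp only [PMF.bind_bind, PMF.bind_map, PMF.map_bind, Function.comp_def]

lemma bind_map_fst_eq_bind_ncond (σ : PMF (Fin n × A)) (h : Fin n → PMF B) :
    σ.bind (fun p => (h p.1).map (·, p.2)) =
      ((fstM σ).bind fun i => (h i).map (·, i)).bind fun p => (ncond σ p.2).map (Prod.mk p.1) := by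
  conv_lhs => rw [← fstM_bind_map_ncond σ]
  simp only [PMF.bind_bind, PMF.bind_map, Function.comp_def]
  congr 1
  funext i
  simp only [← PMF.bind_pure_comp, Function.comp_def]
  exact PMF.bind_comm _ _ _

/-- refinement of tests implies refinement of hyper conditionals:
if `s ⊑ t` via some `h` with `h_*(s a) = t a`, then `ω‖s ⊑ ω‖t` in the
hyper-refinement order. -/
theorem test_refinement_implies_hyper_refinement
    (s : A → PMF (Fin n)) (t : A → PMF (Fin m))
    (hst : ∃ h : Fin n → PMF (Fin m), ∀ a, (s a).bind h = t a)
    (ω : PMF A) :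
    ∃ Ω : PMF (Fin m × PMF (Fin n × PMF A)),
      (Ω.map Prod.snd).bind id = hnorm (ω.bind (gr s)) ∧
      Ω.map (fun p => (p.1, (p.2.map Prod.snd).bind id)) = hnorm (ω.bind (gr t)) := by
  obtain ⟨h, ht⟩ := hst
  obtain rfl : t = fun a => (s a).bind h := funext fun a => (ht a).symm
  set σ := ω.bind (gr s)
  set ρ := (fstM σ).bind fun i => (h i).map (·, i)
  have hρ : ρ.map Prod.snd = fstM σ := by
    simp only [ρ, PMF.map_bind, PMF.map_comp, Function.comp_def]
    conv_rhs => rw [← PMF.bind_pure (fstM σ)]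
    exact congrArg _ (funext fun i => PMF.map_const (h i) i)
  have hτ : ω.bind (gr fun a => (s a).bind h) =
      (fstM ρ).bind fun j => ((ncond ρ j).bind (ncond σ)).map (Prod.mk j) := by
    rw [bind_gr_bind, bind_map_fst_eq_bind_ncond, bind_map_prodMk_eq_bind_ncond]
  refine ⟨(fstM ρ).bind fun j => PMF.pure (j, (ncond ρ j).bind fun i => PMF.pure (i, ncond σ i)),
    ?_, ?_⟩
  · calc _ = (fstM ρ).bind fun j => (ncond ρ j).bind fun i => PMF.pure (i, ncond σ i) := by
          simp [PMF.map_bind, PMF.pure_map, PMF.bind_bind]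
      _ = (ρ.map Prod.snd).bind fun i => PMF.pure (i, ncond σ i) := by
          rw [← fstM_bind_ncond, PMF.bind_bind]
      _ = hnorm σ := by rw [hρ, hnorm]
  · rw [hτ, hnorm_bind_map_prodMk]
    simp [PMF.map_bind, PMF.pure_map, PMF.bind_bind]

end HyperNorm
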